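/- arXiv:1801.09515 — 2 statements merged into one kernel-verified Lean document; each statement's English description precedes it below -/
import Mathlib

section
/- Let D = (V, A) be a digraph and L ⊆ V a feedback vertex set. In the lazy pebble game — where initially pebbles are placed on all arcs leaving vertices in L, and a pebble is placed on every arc leaving a vertex v whenever every arc entering v has a pebble — the game terminates with every arc of D carrying a pebble. -/
/-- The pebbled arcs of the lazy pebble game: initially every arc leaving a leader
(a vertex of `L`) is pebbled, and whenever every arc entering `v` is pebbled,
every arc leaving `v` becomes pebbled. -/
inductive LazyPebbled {V : Type*} (A : V → V → Prop) (L : Set V) : V → V → Prop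
  | init {u v : V} : u ∈ L → A u v → LazyPebbled A L u v
  | step {v w : V} : A v w → (∀ u : V, A u v → LazyPebbled A L u v) →
      LazyPebbled A L v w

private lemma not_nodup_split {α : Type*} {l : List α} (h : ¬ l.Nodup) :
    ∃ (x : α) (l₁ l₂ l₃ : List α), l = l₁ ++ x :: l₂ ++ x :: l₃ := by
  induction l with
  | nil => exact absurd List.nodup_nil h
  | cons a l ih =>
    rw [List.nodup_cons] at h
    push_neg at h
    by_cases ha : a ∈ l
    · obtain ⟨l₂, l₃, rfl⟩ := List.append_of_mem ha
      exact ⟨a, [], l₂, l₃, rfl⟩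
    · obtain ⟨x, l₁, l₂, l₃, rfl⟩ := ih (h ha)
      exact ⟨x, a :: l₁, l₂, l₃, rfl⟩

/-- From any closed chain, extract a closed chain with no repeated vertices. -/
private lemma exists_nodup_cycle {α : Type*} {r : α → α → Prop} :
    ∀ (l : List α) (v : α), List.Chain r v (l ++ [v]) →
      ∃ (w : α) (m : List α), (w :: m).Nodup ∧ List.Chain r w (m ++ [w]) := by
  suffices h : ∀ (n : ℕ) (l : List α), l.length = n → ∀ v : α, List.Chain r v (l ++ [v]) →
      ∃ (w : α) (m : List α), (w :: m).Nodup ∧ List.Chain r w (m ++ [w]) by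
    intro l v hc; exact h l.length l rfl v hc
  intro n
  induction n using Nat.strong_induction_on with
  | _ n ih' =>
    intro l hn v hc
    have ih : ∀ (m : List α), m.length < l.length → ∀ v : α, List.Chain r v (m ++ [v]) →
        ∃ (w : α) (m' : List α), (w :: m').Nodup ∧ List.Chain r w (m' ++ [w]) := by
      intro m hm v hc
      exact ih' m.length (hn ▸ hm) m rfl v hc
    by_cases hvl : v ∈ l
    · obtain ⟨l₁, l₂, rfl⟩ := List.append_of_mem hvl
      have hc' : List.Chain r v (l₁ ++ v :: (l₂ ++ [v])) := by
        simpa [List.append_assoc] using hc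
      refine ih l₁ ?_ v (List.isChain_cons_split.mp hc').1
      simp only [List.length_append, List.length_cons]
      omega
    · by_cases hnd : l.Nodup
      · exact ⟨v, l, List.nodup_cons.mpr ⟨hvl, hnd⟩, hc⟩
      · obtain ⟨x, l₁, l₂, l₃, rfl⟩ := not_nodup_split hnd
        have hc' : List.Chain r v (l₁ ++ x :: (l₂ ++ x :: (l₃ ++ [v]))) := by
          simpa [List.append_assoc] using hc
        have h1 := (List.isChain_cons_split.mp hc').2
        have h2 := (List.isChain_cons_split.mp h1).1
        refine ih l₂ ?_ x h2
        simp only [List.length_append, List.length_cons]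
        omega

private lemma transGen_to_chain {α : Type*} {r : α → α → Prop} {a b : α}
    (h : Relation.TransGen r a b) : ∃ l : List α, List.Chain r a (l ++ [b]) := by
  induction h with
  | single hab => exact ⟨[], List.isChain_pair.mpr hab⟩
  | @tail b' c' _ hbc ih =>
    obtain ⟨l, hl⟩ := ih
    refine ⟨l ++ [b'], ?_⟩
    rw [List.append_assoc]
    show List.Chain r a (l ++ b' :: [c'])
    rw [List.Chain, List.isChain_cons_split]
    exact ⟨hl, List.isChain_pair.mpr hbc⟩

/-- In the lazy pebble game on a finite digraph whose leader set `L` is a feedback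
vertex set (the subdigraph induced on the complement of `L` is acyclic), every arc
eventually has a pebble. -/
theorem lazy_pebble_game_covers {V : Type*} [Fintype V] (A : V → V → Prop) (L : Set V)
    (hFVS : ¬ ∃ (v : V) (l : List V), (v :: l).Nodup ∧
        List.Chain (fun a b => A a b ∧ a ∉ L ∧ b ∉ L) v (l ++ [v])) :
    ∀ u v : V, A u v → LazyPebbled A L u v := by
  set r : V → V → Prop := fun a b => A a b ∧ a ∉ L ∧ b ∉ L with hr
  have hirr : ∀ a : V, ¬ Relation.TransGen r a a := by
    intro a ha
    obtain ⟨l, hl⟩ := transGen_to_chain ha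
    obtain ⟨w, m, hnd, hc⟩ := exists_nodup_cycle l a hl
    exact hFVS ⟨w, m, hnd, hc⟩
  have htrans : IsTrans V (Relation.TransGen r) := inferInstance
  have hirr' : IsIrrefl V (Relation.TransGen r) := ⟨hirr⟩
  have hwf : WellFounded (Relation.TransGen r) :=
    Finite.wellFounded_of_trans_of_irrefl _
  have hwfr : WellFounded r := Subrelation.wf (fun h => Relation.TransGen.single h) hwf
  have key : ∀ v : V, ∀ w : V, A v w → LazyPebbled A L v w := by
    intro v
    induction v using hwfr.induction with
    | _ v ih =>
      intro w hvw
      by_cases hvL : v ∈ L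
      · exact LazyPebbled.init hvL hvw
      · refine LazyPebbled.step hvw ?_
        intro u huv
        by_cases huL : u ∈ L
        · exact LazyPebbled.init huL huv
        · exact ih u ⟨huv, huL, hvL⟩ v huv
  intro u v h
  exact key u v h
end

section
/- Let D = (V, A) be a strongly connected digraph with at least one arc, and suppose L ⊆ V is not a feedback vertex set, so that the induced subdigraph on V \ L contains a directed cycle c. Consider any process in which a vertex v ∉ L may 'act' only after all arcs entering v are marked, and marking an arc (v, w) requires v to have acted; initially only arcs leaving vertices of L are marked. Then no arc of the cycle c is ever marked. -/
lemma chain_zip_mem {V : Type*} {R : V → V → Prop} :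
    ∀ (ys : List V) (x : V), List.Chain R x ys →
      ∀ a b : V, (a, b) ∈ List.zip (x :: ys) ys → R a b := by
  intro ys
  induction ys with
  | nil => intro x _ a b h; simp at h
  | cons y ys ih =>
      intro x hch a b h
      rw [List.Chain, List.chain_cons] at hch
      simp only [List.zip_cons_cons, List.mem_cons] at h
      rcases h with h | h
      · obtain ⟨ha, hb⟩ := Prod.mk.injEq .. ▸ h
        simp only [Prod.mk.injEq] at h
        exact h.1 ▸ h.2 ▸ hch.1
      · exact ih y hch.2 a b h

/-- Deadlock: in a strongly connected digraph `A` with leader set `L`, consider a marking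
process `M` where initially exactly the arcs leaving leaders are marked, marking grows
monotonically, and an arc leaving a non-leader `v` can only become marked once all arcs
entering `v` are marked.  If `c` is a directed cycle avoiding `L` (witnessing that `L`
is not a feedback vertex set), then no arc of the cycle is ever marked. -/
theorem cycle_never_marked {V : Type*} (A : V → V → Prop)
    (hsc : ∀ u v : V, Relation.ReflTransGen A u v)
    (L : Set V) (v : V) (l : List V)
    (hnodup : (v :: l).Nodup)
    (hcyc : List.Chain (fun a b => A a b ∧ a ∉ L ∧ b ∉ L) v (l ++ [v]))
    (M : ℕ → Set (V × V))
    (hM0 : M 0 = {p : V × V | p.1 ∈ L ∧ A p.1 p.2})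
    (hmono : ∀ t : ℕ, M t ⊆ M (t + 1))
    (hstep : ∀ (t : ℕ) (p : V × V), p ∈ M (t + 1) →
        p ∈ M t ∨ p.1 ∈ L ∨ ∀ u : V, A u p.1 → (u, p.1) ∈ M t) :
    ∀ (t : ℕ) (a b : V), (a, b) ∈ List.zip (v :: (l ++ [v])) (l ++ [v]) →
      (a, b) ∉ M t := by
  have hedge := chain_zip_mem (l ++ [v]) v hcyc
  -- every first component of a zip pair has a predecessor pair in the zip
  have hpred : ∀ a b : V, (a, b) ∈ List.zip (v :: (l ++ [v])) (l ++ [v]) →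
      ∃ a' : V, (a', a) ∈ List.zip (v :: (l ++ [v])) (l ++ [v]) := by
    intro a b hab
    have hmem := List.of_mem_zip hab
    have ha2 : a ∈ l ++ [v] := by
      rcases List.mem_cons.1 hmem.1 with h | h
      · simp [h]
      · exact h
    have hlen : (l ++ [v]).length ≤ (v :: (l ++ [v])).length := by simp
    have hsnd := List.map_snd_zip (l₁ := v :: (l ++ [v])) (l₂ := l ++ [v]) hlen
    rw [← hsnd] at ha2
    obtain ⟨p, hp, hpa⟩ := List.mem_map.1 ha2
    obtain ⟨p1, p2⟩ := p
    cases hpa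
    exact ⟨p1, hp⟩
  intro t
  induction t with
  | zero =>
      intro a b hab hM
      rw [hM0] at hM
      exact (hedge a b hab).2.1 hM.1
  | succ t ih =>
      intro a b hab hM
      rcases hstep t (a, b) hM with h | h | h
      · exact ih a b hab h
      · exact (hedge a b hab).2.1 h
      · obtain ⟨a', ha'⟩ := hpred a b hab
        exact ih a' a ha' (h a' (hedge a' a ha').1)
end
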